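/- The limiting correlation between the two diagonal entries of a uniformly random product of k matrices from {L,R}, as k → ∞, equals (51 - 11√17)/(34 - 6√17) ≈ 0.61. Formally: Cov_k/(σ_{u,k}·σ_{l,k}) → (51 - 11√17)/(34 - 6√17) as k → ∞, where Cov_k is the covariance of the diagonal entries and σ² their common variance. -/
import Mathlib


open Matrix MeasureTheory BigOperators

def Lm : Matrix (Fin 2) (Fin 2) ℤ := !![1,1;0,1]
def Rm : Matrix (Fin 2) (Fin 2) ℤ := !![1,0;1,1]

/-- Ordered product of the matrices corresponding to a word over {L,R}. -/
def Mw {k : ℕ} (w : Fin k → Fin 2) : Matrix (Fin 2) (Fin 2) ℤ :=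
  (List.ofFn (fun i => if w i = 0 then Lm else Rm)).prod

/-- Expected value of the (0,0) entry of the random product of k matrices. -/
noncomputable def EX (k : ℕ) : ℝ := (∑ w : Fin k → Fin 2, (Mw w 0 0 : ℝ)) / 2 ^ k

/-- Expected value of the (1,1) entry of the random product of k matrices. -/
noncomputable def EY (k : ℕ) : ℝ := (∑ w : Fin k → Fin 2, (Mw w 1 1 : ℝ)) / 2 ^ k

/-- Covariance of the two diagonal entries. -/
noncomputable def CovXY (k : ℕ) : ℝ :=
  (∑ w : Fin k → Fin 2, (Mw w 0 0 : ℝ) * (Mw w 1 1 : ℝ)) / 2 ^ k - EX k * EY k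

/-- Variance of the (0,0) entry (equal to that of the (1,1) entry by symmetry). -/
noncomputable def VarX (k : ℕ) : ℝ :=
  (∑ w : Fin k → Fin 2, (Mw w 0 0 : ℝ) ^ 2) / 2 ^ k - EX k ^ 2

noncomputable def S (k : ℕ) (f : Matrix (Fin 2) (Fin 2) ℤ → ℝ) : ℝ :=
  ∑ w : Fin k → Fin 2, f (Mw w)

noncomputable def rt17 : ℝ := Real.sqrt 17
noncomputable def lam : ℝ := (5 + rt17) / 2
noncomputable def mu : ℝ := (5 - rt17) / 2
noncomputable def Ac : ℝ := (17 + rt17) / 68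
noncomputable def Bc : ℝ := (17 - rt17) / 68
noncomputable def Ec : ℝ := rt17 / 17

noncomputable def Sa (k : ℕ) : ℝ := S k fun M => (M 0 0 : ℝ)
noncomputable def Sb (k : ℕ) : ℝ := S k fun M => (M 0 1 : ℝ)
noncomputable def Sc (k : ℕ) : ℝ := S k fun M => (M 1 0 : ℝ)
noncomputable def Sd (k : ℕ) : ℝ := S k fun M => (M 1 1 : ℝ)
noncomputable def Saa (k : ℕ) : ℝ := S k fun M => (M 0 0 : ℝ) ^ 2
noncomputable def Sac (k : ℕ) : ℝ := S k fun M => (M 0 0 : ℝ) * (M 1 0 : ℝ)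
noncomputable def Scc (k : ℕ) : ℝ := S k fun M => (M 1 0 : ℝ) ^ 2
noncomputable def Sad (k : ℕ) : ℝ := S k fun M => (M 0 0 : ℝ) * (M 1 1 : ℝ)
noncomputable def Sab (k : ℕ) : ℝ := S k fun M => (M 0 0 : ℝ) * (M 0 1 : ℝ)
noncomputable def Scd (k : ℕ) : ℝ := S k fun M => (M 1 0 : ℝ) * (M 1 1 : ℝ)
noncomputable def Sbc (k : ℕ) : ℝ := S k fun M => (M 0 1 : ℝ) * (M 1 0 : ℝ)

lemma Mw_cons {k : ℕ} (x : Fin 2) (w : Fin k → Fin 2) :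
    Mw (Fin.cons x w) = (if x = 0 then Lm else Rm) * Mw w := by
  simp [Mw, List.ofFn_succ, Fin.cons_zero, Fin.cons_succ]

lemma S_succ {k : ℕ} (f : Matrix (Fin 2) (Fin 2) ℤ → ℝ) :
    S (k+1) f = ∑ w : Fin k → Fin 2, (f (Lm * Mw w) + f (Rm * Mw w)) := by
  show (∑ w : Fin (k+1) → Fin 2, f (Mw w)) = _
  rw [← (Fin.consEquiv (fun _ : Fin (k+1) => Fin 2)).sum_comp (fun w => f (Mw w))]
  rw [Fintype.sum_prod_type, Fin.sum_univ_two]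
  rw [← Finset.sum_add_distrib]
  refine Finset.sum_congr rfl fun w _ => ?_
  show f (Mw (Fin.cons 0 w)) + f (Mw (Fin.cons 1 w)) = _
  rw [Mw_cons, Mw_cons]
  norm_num

lemma L00 (M : Matrix (Fin 2) (Fin 2) ℤ) : (Lm * M) 0 0 = M 0 0 + M 1 0 := by
  simp [Lm, Matrix.mul_apply, Fin.sum_univ_two]
lemma L01 (M : Matrix (Fin 2) (Fin 2) ℤ) : (Lm * M) 0 1 = M 0 1 + M 1 1 := by
  simp [Lm, Matrix.mul_apply, Fin.sum_univ_two]
lemma L10 (M : Matrix (Fin 2) (Fin 2) ℤ) : (Lm * M) 1 0 = M 1 0 := by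
  simp [Lm, Matrix.mul_apply, Fin.sum_univ_two]
lemma L11 (M : Matrix (Fin 2) (Fin 2) ℤ) : (Lm * M) 1 1 = M 1 1 := by
  simp [Lm, Matrix.mul_apply, Fin.sum_univ_two]
lemma R00 (M : Matrix (Fin 2) (Fin 2) ℤ) : (Rm * M) 0 0 = M 0 0 := by
  simp [Rm, Matrix.mul_apply, Fin.sum_univ_two]
lemma R01 (M : Matrix (Fin 2) (Fin 2) ℤ) : (Rm * M) 0 1 = M 0 1 := by
  simp [Rm, Matrix.mul_apply, Fin.sum_univ_two]
lemma R10 (M : Matrix (Fin 2) (Fin 2) ℤ) : (Rm * M) 1 0 = M 0 0 + M 1 0 := by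
  simp [Rm, Matrix.mul_apply, Fin.sum_univ_two]
lemma R11 (M : Matrix (Fin 2) (Fin 2) ℤ) : (Rm * M) 1 1 = M 0 1 + M 1 1 := by
  simp [Rm, Matrix.mul_apply, Fin.sum_univ_two]

section recs
variable (k : ℕ)

lemma rec_a : Sa (k+1) = 2 * Sa k + Sc k := by
  rw [Sa, S_succ]
  simp only [Sa, Sc, S, L00, R00]
  conv_rhs => rw [Finset.mul_sum, ← Finset.sum_add_distrib]
  exact Finset.sum_congr rfl fun w _ => by push_cast; ring

lemma rec_c : Sc (k+1) = Sa k + 2 * Sc k := by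
  rw [Sc, S_succ]
  simp only [Sa, Sc, S, L10, R10]
  conv_rhs => rw [Finset.mul_sum, ← Finset.sum_add_distrib]
  exact Finset.sum_congr rfl fun w _ => by push_cast; ring

lemma rec_b : Sb (k+1) = 2 * Sb k + Sd k := by
  rw [Sb, S_succ]
  simp only [Sb, Sd, S, L01, R01]
  conv_rhs => rw [Finset.mul_sum, ← Finset.sum_add_distrib]
  exact Finset.sum_congr rfl fun w _ => by push_cast; ring

lemma rec_d : Sd (k+1) = Sb k + 2 * Sd k := by
  rw [Sd, S_succ]
  simp only [Sb, Sd, S, L11, R11]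
  conv_rhs => rw [Finset.mul_sum, ← Finset.sum_add_distrib]
  exact Finset.sum_congr rfl fun w _ => by push_cast; ring

lemma rec_aa : Saa (k+1) = 2 * Saa k + 2 * Sac k + Scc k := by
  rw [Saa, S_succ]
  simp only [Saa, Sac, Scc, S, L00, R00]
  conv_rhs => rw [Finset.mul_sum, Finset.mul_sum, ← Finset.sum_add_distrib, ← Finset.sum_add_distrib]
  exact Finset.sum_congr rfl fun w _ => by push_cast; ring

lemma rec_ac : Sac (k+1) = Saa k + 2 * Sac k + Scc k := by
  rw [Sac, S_succ]
  simp only [Saa, Sac, Scc, S, L00, L10, R00, R10]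
  conv_rhs => rw [Finset.mul_sum, ← Finset.sum_add_distrib, ← Finset.sum_add_distrib]
  exact Finset.sum_congr rfl fun w _ => by push_cast; ring

lemma rec_cc : Scc (k+1) = Saa k + 2 * Sac k + 2 * Scc k := by
  rw [Scc, S_succ]
  simp only [Saa, Sac, Scc, S, L10, R10]
  conv_rhs => rw [Finset.mul_sum, Finset.mul_sum, ← Finset.sum_add_distrib, ← Finset.sum_add_distrib]
  exact Finset.sum_congr rfl fun w _ => by push_cast; ring

lemma rec_ad : Sad (k+1) = 2 * Sad k + Sab k + Scd k := by
  rw [Sad, S_succ]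
  simp only [Sad, Sab, Scd, S, L00, L11, R00, R11]
  conv_rhs => rw [Finset.mul_sum, ← Finset.sum_add_distrib, ← Finset.sum_add_distrib]
  exact Finset.sum_congr rfl fun w _ => by push_cast; ring

lemma rec_ab : Sab (k+1) = Sad k + 2 * Sab k + Sbc k + Scd k := by
  rw [Sab, S_succ]
  simp only [Sad, Sab, Sbc, Scd, S, L00, L01, R00, R01]
  conv_rhs => rw [Finset.mul_sum, ← Finset.sum_add_distrib, ← Finset.sum_add_distrib, ← Finset.sum_add_distrib]
  exact Finset.sum_congr rfl fun w _ => by push_cast; ring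

lemma rec_cd : Scd (k+1) = Sab k + Sad k + Sbc k + 2 * Scd k := by
  rw [Scd, S_succ]
  simp only [Sad, Sab, Sbc, Scd, S, L10, L11, R10, R11]
  conv_rhs => rw [Finset.mul_sum, ← Finset.sum_add_distrib, ← Finset.sum_add_distrib, ← Finset.sum_add_distrib]
  exact Finset.sum_congr rfl fun w _ => by push_cast; ring

lemma rec_bc : Sbc (k+1) = Sab k + 2 * Sbc k + Scd k := by
  rw [Sbc, S_succ]
  simp only [Sab, Sbc, Scd, S, L01, L10, R01, R10]
  conv_rhs => rw [Finset.mul_sum, ← Finset.sum_add_distrib, ← Finset.sum_add_distrib]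
  exact Finset.sum_congr rfl fun w _ => by push_cast; ring

end recs

lemma hrt : rt17 ^ 2 = 17 := Real.sq_sqrt (by norm_num)

lemma hAl : Ac * lam = 3 * Ac + 2 * Ec := by
  simp only [Ac, lam, Ec]; linear_combination hrt / 136
lemma hBm : Bc * mu = 3 * Bc - 2 * Ec := by
  simp only [Bc, mu, Ec]; linear_combination hrt / 136
lemma hEl : Ec * lam = 2 * Ac + 2 * Ec := by
  simp only [Ac, lam, Ec]; linear_combination hrt / 34
lemma hEm : Ec * mu = 2 * Ec - 2 * Bc := by
  simp only [Bc, mu, Ec]; linear_combination -hrt / 34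
lemma hBl : Bc * lam = 2 * Bc + 2 * Ec := by
  simp only [Bc, lam, Ec]; linear_combination -hrt / 136
lemma hAm : Ac * mu = 2 * Ac - 2 * Ec := by
  simp only [Ac, mu, Ec]; linear_combination -hrt / 136
lemma hEl2 : Ec * lam = 2 * Bc + 3 * Ec := by
  simp only [Bc, lam, Ec]; linear_combination hrt / 34
lemma hEm2 : Ec * mu = 3 * Ec - 2 * Ac := by
  simp only [Ac, mu, Ec]; linear_combination -hrt / 34

lemma closed (k : ℕ) :
    Sa k = (3 ^ k + 1) / 2 ∧ Sc k = (3 ^ k - 1) / 2 ∧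
    Sb k = (3 ^ k - 1) / 2 ∧ Sd k = (3 ^ k + 1) / 2 ∧
    Saa k = Ac * lam ^ k + Bc * mu ^ k + 1 / 2 ∧
    Sac k = Ec * (lam ^ k - mu ^ k) ∧
    Scc k = Ac * lam ^ k + Bc * mu ^ k - 1 / 2 ∧
    Sad k = Bc * lam ^ k + Ac * mu ^ k + 2 ^ k / 2 ∧
    Sab k = Ec * (lam ^ k - mu ^ k) ∧
    Scd k = Ec * (lam ^ k - mu ^ k) ∧
    Sbc k = Bc * lam ^ k + Ac * mu ^ k - 2 ^ k / 2 := by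
  induction k with
  | zero =>
    refine ⟨?_, ?_, ?_, ?_, ?_, ?_, ?_, ?_, ?_, ?_, ?_⟩ <;>
        simp [Sa, Sb, Sc, Sd, Saa, Sac, Scc, Sad, Sab, Scd, Sbc, S, Mw, Matrix.one_apply,
          Ac, Bc, Ec] <;> ring
  | succ k ih =>
    obtain ⟨h1, h2, h3, h4, h5, h6, h7, h8, h9, h10, h11⟩ := ih
    refine ⟨?_, ?_, ?_, ?_, ?_, ?_, ?_, ?_, ?_, ?_, ?_⟩
    · rw [rec_a, h1, h2]; ring
    · rw [rec_c, h1, h2]; ring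
    · rw [rec_b, h3, h4]; ring
    · rw [rec_d, h3, h4]; ring
    · rw [rec_aa, h5, h6, h7]
      linear_combination (-(lam ^ k)) * hAl + (-(mu ^ k)) * hBm
    · rw [rec_ac, h5, h6, h7]
      linear_combination (-(lam ^ k)) * hEl + (mu ^ k) * hEm
    · rw [rec_cc, h5, h6, h7]
      linear_combination (-(lam ^ k)) * hAl + (-(mu ^ k)) * hBm
    · rw [rec_ad, h8, h9, h10]
      linear_combination (-(lam ^ k)) * hBl + (-(mu ^ k)) * hAm
    · rw [rec_ab, h8, h9, h10, h11]
      linear_combination (-(lam ^ k)) * hEl2 + (mu ^ k) * hEm2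
    · rw [rec_cd, h8, h9, h10, h11]
      linear_combination (-(lam ^ k)) * hEl2 + (mu ^ k) * hEm2
    · rw [rec_bc, h9, h10, h11]
      linear_combination (-(lam ^ k)) * hBl + (-(mu ^ k)) * hAm

/-- The limiting correlation of the two diagonal entries is
(51 - 11√17)/(34 - 6√17) ≈ 0.61. -/
theorem limiting_correlation :
    Filter.Tendsto (fun k => CovXY k / VarX k) Filter.atTop
      (nhds ((51 - 11 * Real.sqrt 17) / (34 - 6 * Real.sqrt 17))) := by
  have hrt0 : (0:ℝ) ≤ rt17 := Real.sqrt_nonneg 17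
  have hrt4 : (4:ℝ) < rt17 := by nlinarith [hrt, hrt0]
  have hrt5 : rt17 < 5 := by nlinarith [hrt, hrt0]
  have hlam0 : (0:ℝ) < lam := by simp only [lam]; linarith
  have hlamne : lam ≠ 0 := ne_of_gt hlam0
  have hlam2 : (2:ℝ) < lam := by simp only [lam]; linarith
  have hlam9 : (9:ℝ) < 2 * lam := by simp only [lam]; linarith
  have hmu0 : (0:ℝ) ≤ mu := by simp only [mu]; linarith
  have hmul : mu < lam := by simp only [mu, lam]; linarith
  have h2k : ∀ k : ℕ, ((2:ℝ)) ^ k ≠ 0 := fun k => pow_ne_zero _ two_ne_zero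
  have hlk : ∀ k : ℕ, lam ^ k ≠ 0 := fun k => pow_ne_zero _ hlamne
  have key : ∀ k : ℕ, CovXY k * (2/lam) ^ k
      = Bc + Ac * (mu/lam) ^ k + (1/2) * (2/lam) ^ k
        - (1/4) * ((9/(2*lam)) ^ k + 2 * (3/(2*lam)) ^ k + (1/(2*lam)) ^ k) := by
    intro k
    obtain ⟨h1, h2, h3, h4, h5, h6, h7, h8, h9, h10, h11⟩ := closed k
    have e1 : CovXY k = Sad k / 2 ^ k - (Sa k / 2 ^ k) * (Sd k / 2 ^ k) := rfl
    rw [e1, h1, h4, h8]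
    have h9k : (9:ℝ) ^ k = 3 ^ k * 3 ^ k := by rw [← mul_pow]; norm_num
    simp only [div_pow, mul_pow, one_pow]
    rw [h9k]
    field_simp
    ring
  have keyV : ∀ k : ℕ, VarX k * (2/lam) ^ k
      = Ac + Bc * (mu/lam) ^ k + (1/2) * (1/lam) ^ k
        - (1/4) * ((9/(2*lam)) ^ k + 2 * (3/(2*lam)) ^ k + (1/(2*lam)) ^ k) := by
    intro k
    obtain ⟨h1, h2, h3, h4, h5, h6, h7, h8, h9, h10, h11⟩ := closed k
    have e1 : VarX k = Saa k / 2 ^ k - (Sa k / 2 ^ k) ^ 2 := rfl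
    rw [e1, h1, h5]
    have h9k : (9:ℝ) ^ k = 3 ^ k * 3 ^ k := by rw [← mul_pow]; norm_num
    simp only [div_pow, mul_pow, one_pow]
    rw [h9k]
    field_simp
    ring
  have hpow : ∀ r : ℝ, 0 ≤ r → r < 1 →
      Filter.Tendsto (fun k : ℕ => r ^ k) Filter.atTop (nhds 0) :=
    fun r h0 h1 => tendsto_pow_atTop_nhds_zero_of_lt_one h0 h1
  have p1 := hpow (mu/lam) (div_nonneg hmu0 hlam0.le) ((div_lt_one hlam0).2 hmul)
  have p2 := hpow (2/lam) (by positivity) ((div_lt_one hlam0).2 hlam2)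
  have p3 := hpow (9/(2*lam)) (by positivity) ((div_lt_one (by linarith)).2 hlam9)
  have p4 := hpow (3/(2*lam)) (by positivity) ((div_lt_one (by linarith)).2 (by linarith))
  have p5 := hpow (1/(2*lam)) (by positivity) ((div_lt_one (by linarith)).2 (by linarith))
  have p6 := hpow (1/lam) (by positivity) ((div_lt_one hlam0).2 (by linarith))
  have TC : Filter.Tendsto (fun k => CovXY k * (2/lam) ^ k) Filter.atTop (nhds Bc) := by
    have T1 := ((tendsto_const_nhds (x := Bc)).add ((p1.const_mul Ac).add
      (p2.const_mul (1/2)))).sub (((p3.add (p4.const_mul 2)).add p5).const_mul (1/4))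
    norm_num at T1
    refine (Filter.Tendsto.congr (fun k => ?_) T1)
    rw [key k]; ring
  have TV : Filter.Tendsto (fun k => VarX k * (2/lam) ^ k) Filter.atTop (nhds Ac) := by
    have T1 := ((tendsto_const_nhds (x := Ac)).add ((p1.const_mul Bc).add
      (p6.const_mul (1/2)))).sub (((p3.add (p4.const_mul 2)).add p5).const_mul (1/4))
    norm_num at T1
    refine (Filter.Tendsto.congr (fun k => ?_) T1)
    rw [keyV k]; ring
  have hAcpos : (0:ℝ) < Ac := by simp only [Ac]; linarith
  have hne : ∀ k : ℕ, (2/lam) ^ k ≠ 0 := fun k => pow_ne_zero _ (by positivity)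
  have TQ : Filter.Tendsto (fun k => CovXY k / VarX k) Filter.atTop (nhds (Bc / Ac)) := by
    refine Filter.Tendsto.congr (fun k => ?_) (TC.div TV hAcpos.ne')
    simp only [Pi.div_apply]
    rw [mul_div_mul_right _ _ (hne k)]
  have hval : Bc / Ac = (51 - 11 * Real.sqrt 17) / (34 - 6 * Real.sqrt 17) := by
    have h34 : (0:ℝ) < 34 - 6 * Real.sqrt 17 := by
      have : Real.sqrt 17 < 5 := hrt5
      linarith
    rw [div_eq_div_iff hAcpos.ne' h34.ne']
    have hrt' : Real.sqrt 17 ^ 2 = 17 := hrt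
    simp only [Ac, Bc, rt17]
    linear_combination (1/4) * hrt'
  rw [← hval]
  exact TQ
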